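/- arXiv:2506.20789 — 5 statements merged into one kernel-verified Lean document; each statement's English description precedes it below -/
import Mathlib

section
/- Let p ∈ (1,2] and d ∈ (0,1) with (1−d)p > 1. Let (ε_i)_{i≥1} be i.i.d. real random variables with E[ε_1] = 0 and E|ε_1|^p < ∞, and let (a_i)_{i≥1} be real numbers with |a_i| ≤ C₀·i^{−(1−d)} for all i ≥ 1 and some C₀ > 0. Suppose that for each k ≥ 1 there is a random variable S_k such that almost surely ∑_{i=k+1}^m a_i ε_i → S_k as m → ∞. Then there exists C > 0 such that E|S_k|^p ≤ C·k^{1−(1−d)p} for all k ≥ 1. -/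
/-!
The von Bahr–Esseen inequality carries the argument. For `1 < p ≤ 2` the derivative
`x ↦ p |x| ^ (p - 2) x` of `|x| ^ p` is `(p - 1)`-Hölder, so by the mean value theorem
`|x + y| ^ p ≤ |x| ^ p + p |x| ^ (p - 2) x y + 2p |y| ^ p`. For independent `X`, `Y` with `E Y = 0`
the linear term has mean zero, so `E|X + Y| ^ p ≤ E|X| ^ p + 2p E|Y| ^ p`, and by induction
`E|∑ a_i ε_i| ^ p ≤ 2p E|ε| ^ p ∑ |a_i| ^ p`. With `|a_i| ^ p ≤ C₀ ^ p i ^ (-(1 - d) p)`, comparison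
with `∫_k^∞ x ^ (-(1 - d) p) dx` bounds every partial sum of the tail by a multiple of
`k ^ (1 - (1 - d) p)`, and Fatou's lemma passes the bound to the limit `S_k`.
-/

open MeasureTheory Filter ProbabilityTheory
open scoped ENNReal Topology

namespace Real

lemma abs_rpow_sub_rpow_le {r u v : ℝ} (hr0 : 0 ≤ r) (hr1 : r ≤ 1) (hu : 0 ≤ u) (hv : 0 ≤ v) :
    |u ^ r - v ^ r| ≤ |u - v| ^ r := by
  have key : ∀ x y : ℝ, 0 ≤ x → 0 ≤ y → x ^ r - y ^ r ≤ |x - y| ^ r := fun x y hx hy => by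
    have hmono : x ^ r ≤ (|x - y| + y) ^ r :=
      rpow_le_rpow hx (by linarith [le_abs_self (x - y)]) hr0
    linarith [rpow_add_le_add_rpow (abs_nonneg (x - y)) hy hr0 hr1]
  rw [abs_sub_le_iff]
  exact ⟨key u v hu hv, abs_sub_comm u v ▸ key v u hv hu⟩

lemma abs_rpow_sub_two_mul_self_of_nonneg {p x : ℝ} (hp : 1 < p) (hx : 0 ≤ x) :
    |x| ^ (p - 2) * x = x ^ (p - 1) := by
  rcases hx.eq_or_lt with rfl | hx
  · simp [zero_rpow (by linarith : p - 1 ≠ 0)]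
  · rw [abs_of_pos hx, show p - 1 = p - 2 + 1 by ring, rpow_add_one hx.ne']

lemma abs_abs_rpow_sub_two_mul_sub_le {p : ℝ} (hp1 : 1 < p) (hp2 : p ≤ 2) (u v : ℝ) :
    |(|u| ^ (p - 2) * u) - |v| ^ (p - 2) * v| ≤ 2 * |u - v| ^ (p - 1) := by
  wlog huv : v ≤ u generalizing u v
  · rw [abs_sub_comm, abs_sub_comm u]
    exact this v u (le_of_not_ge huv)
  have hr0 : 0 ≤ p - 1 := by linarith
  have hr1 : p - 1 ≤ 1 := by linarith
  have hneg : ∀ x : ℝ, x ≤ 0 → |x| ^ (p - 2) * x = -(-x) ^ (p - 1) := fun x hx => by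
    rw [← abs_neg, ← abs_rpow_sub_two_mul_self_of_nonneg hp1 (neg_nonneg.2 hx)]; ring
  have hnonneg : 0 ≤ |u - v| ^ (p - 1) := by positivity
  rcases le_total 0 v with hv | hv
  · rw [abs_rpow_sub_two_mul_self_of_nonneg hp1 hv,
      abs_rpow_sub_two_mul_self_of_nonneg hp1 (hv.trans huv)]
    linarith [abs_rpow_sub_rpow_le hr0 hr1 (hv.trans huv) hv]
  rcases le_total u 0 with hu | hu
  · rw [hneg u hu, hneg v hv, neg_sub_neg]
    have := abs_rpow_sub_rpow_le hr0 hr1 (neg_nonneg.2 hv) (neg_nonneg.2 hu)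
    rw [neg_sub_neg] at this
    linarith
  · rw [abs_rpow_sub_two_mul_self_of_nonneg hp1 hu, hneg v hv, sub_neg_eq_add,
      abs_of_nonneg (add_nonneg (rpow_nonneg hu _) (rpow_nonneg (neg_nonneg.2 hv) _)),
      abs_of_nonneg (by linarith)]
    linarith [rpow_le_rpow hu (by linarith : u ≤ u - v) hr0,
      rpow_le_rpow (neg_nonneg.2 hv) (by linarith : -v ≤ u - v) hr0]

lemma abs_add_rpow_le {p : ℝ} (hp1 : 1 < p) (hp2 : p ≤ 2) (x y : ℝ) :
    |x + y| ^ p ≤ |x| ^ p + p * |x| ^ (p - 2) * x * y + 2 * p * |y| ^ p := by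
  wlog hy : 0 < y generalizing x y
  · rcases (not_lt.1 hy).eq_or_lt with rfl | hy
    · simp [zero_rpow (by linarith : p ≠ 0)]
    · have h := this (-x) (-y) (neg_pos.2 hy)
      simp only [← neg_add, abs_neg, mul_neg, neg_mul, neg_neg] at h
      exact h
  obtain ⟨c, hc, hslope⟩ := exists_hasDerivAt_eq_slope (fun t : ℝ => |t| ^ p)
    (fun t => p * |t| ^ (p - 2) * t) (by linarith : x < x + y)
    ((continuous_rpow_const (by linarith)).comp continuous_abs).continuousOn
    (fun t _ => hasDerivAt_abs_rpow t hp1)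
  rw [add_sub_cancel_left, eq_div_iff hy.ne'] at hslope
  have hcx : |c - x| ≤ |y| := by
    rw [abs_of_pos hy, abs_of_pos (by linarith [hc.1])]; linarith [hc.2]
  have hholder : (|c| ^ (p - 2) * c - |x| ^ (p - 2) * x) * y ≤ 2 * |y| ^ (p - 1) * |y| :=
    calc (|c| ^ (p - 2) * c - |x| ^ (p - 2) * x) * y
        ≤ |(|c| ^ (p - 2) * c) - |x| ^ (p - 2) * x| * |y| := by
          rw [← abs_mul]; exact le_abs_self _
      _ ≤ 2 * |y| ^ (p - 1) * |y| := by
          gcongr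
          exact (abs_abs_rpow_sub_two_mul_sub_le hp1 hp2 c x).trans (by gcongr)
  rw [mul_assoc, ← rpow_add_one (abs_pos.2 hy.ne').ne', sub_add_cancel] at hholder
  linarith [mul_le_mul_of_nonneg_left hholder (by linarith : (0 : ℝ) ≤ p)]

lemma abs_mul_abs_rpow_sub_two_mul_le {p : ℝ} (hp1 : 1 < p) (hp2 : p ≤ 2) (x y : ℝ) :
    |p * |x| ^ (p - 2) * x * y| ≤ |x| ^ p + 2 * p * |y| ^ p := by
  have hplus := abs_add_rpow_le hp1 hp2 x y
  have hminus := abs_add_rpow_le hp1 hp2 x (-y)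
  rw [abs_neg] at hminus
  rw [abs_le]
  constructor <;> linarith [rpow_nonneg (abs_nonneg (x + y)) p,
    rpow_nonneg (abs_nonneg (x + -y)) p, rpow_nonneg (abs_nonneg x) p]

lemma sum_Icc_rpow_neg_le {q : ℝ} (hq : 1 < q) {k : ℕ} (hk : 0 < k) (m : ℕ) :
    ∑ i ∈ Finset.Icc (k + 1) m, (i : ℝ) ^ (-q) ≤ (k : ℝ) ^ (1 - q) / (q - 1) := by
  have hk' : (0 : ℝ) < k := by exact_mod_cast hk
  rcases le_or_gt m k with hmk | hkm
  · rw [Finset.Icc_eq_empty (by omega), Finset.sum_empty]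
    exact div_nonneg (rpow_nonneg hk'.le _) (by linarith)
  have hanti : AntitoneOn (fun x : ℝ => x ^ (-q)) (Set.Icc (k : ℝ) m) := fun x hx y _ hxy =>
    rpow_le_rpow_of_nonpos (hk'.trans_le hx.1) hxy (by linarith)
  have hzero : (0 : ℝ) ∉ Set.uIcc (k : ℝ) m := by
    rw [Set.uIcc_of_le (by exact_mod_cast hkm.le)]
    exact fun h => hk'.not_ge h.1
  calc ∑ i ∈ Finset.Icc (k + 1) m, (i : ℝ) ^ (-q)
      = ∑ i ∈ Finset.Ico k m, ((i + 1 : ℕ) : ℝ) ^ (-q) := by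
        rw [← Finset.Ico_add_one_right_eq_Icc, ← Finset.sum_Ico_add']
    _ ≤ ∫ x in (k : ℝ)..m, x ^ (-q) := hanti.sum_le_integral_Ico hkm.le
    _ = ((k : ℝ) ^ (1 - q) - (m : ℝ) ^ (1 - q)) / (q - 1) := by
        rw [integral_rpow (Or.inr ⟨by linarith, hzero⟩), show -q + 1 = 1 - q by ring,
          ← neg_sub q 1, div_neg, ← neg_div, neg_sub]
    _ ≤ (k : ℝ) ^ (1 - q) / (q - 1) := by
        gcongr
        linarith [rpow_nonneg (Nat.cast_nonneg m : (0 : ℝ) ≤ m) (1 - q)]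

lemma sum_Icc_abs_rpow_le {a : ℕ → ℝ} {C₀ α p : ℝ} (hp : 0 ≤ p) (hαp : 1 < α * p) (hC₀ : 0 ≤ C₀)
    (ha : ∀ i : ℕ, 1 ≤ i → |a i| ≤ C₀ * (i : ℝ) ^ (-α)) {k : ℕ} (hk : 0 < k) (m : ℕ) :
    ∑ i ∈ Finset.Icc (k + 1) m, |a i| ^ p ≤ C₀ ^ p * ((k : ℝ) ^ (1 - α * p) / (α * p - 1)) := by
  calc ∑ i ∈ Finset.Icc (k + 1) m, |a i| ^ p
      ≤ ∑ i ∈ Finset.Icc (k + 1) m, C₀ ^ p * (i : ℝ) ^ (-(α * p)) := by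
        refine Finset.sum_le_sum fun i hi => ?_
        have hi : 1 ≤ i := by have := (Finset.mem_Icc.1 hi).1; omega
        calc |a i| ^ p ≤ (C₀ * (i : ℝ) ^ (-α)) ^ p := rpow_le_rpow (abs_nonneg _) (ha i hi) hp
          _ = C₀ ^ p * (i : ℝ) ^ (-(α * p)) := by
            rw [mul_rpow hC₀ (by positivity), ← rpow_mul (by positivity), neg_mul]
    _ = C₀ ^ p * ∑ i ∈ Finset.Icc (k + 1) m, (i : ℝ) ^ (-(α * p)) := by rw [Finset.mul_sum]
    _ ≤ C₀ ^ p * ((k : ℝ) ^ (1 - α * p) / (α * p - 1)) := by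
        gcongr
        exact sum_Icc_rpow_neg_le hαp hk m

end Real

open Real

namespace MeasureTheory

variable {α : Type*} [MeasurableSpace α] {μ : Measure α} {p : ℝ}

lemma MemLp.integrable_abs_rpow [IsFiniteMeasure μ] {f : α → ℝ} (hp : 0 ≤ p)
    (hf : MemLp f (ENNReal.ofReal p) μ) : Integrable (fun x => |f x| ^ p) μ := by
  simpa [ENNReal.toReal_ofReal hp] using hf.integrable_norm_rpow'

lemma ofReal_integral_abs_rpow {f : α → ℝ} (hp : 0 ≤ p) (hf : Integrable (fun x => |f x| ^ p) μ) :
    ENNReal.ofReal (∫ x, |f x| ^ p ∂μ) = ∫⁻ x, ‖f x‖ₑ ^ p ∂μ := by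
  rw [ofReal_integral_eq_lintegral_ofReal hf (ae_of_all _ fun _ => by positivity)]
  congr 1 with x
  rw [← ENNReal.ofReal_rpow_of_nonneg (abs_nonneg _) hp, Real.enorm_eq_ofReal_abs]

theorem lintegral_enorm_rpow_le_of_ae_tendsto {E : Type*} [NormedAddCommGroup E]
    {f : ℕ → α → E} {g : α → E} {B : ℝ≥0∞} (hf : ∀ n, AEStronglyMeasurable (f n) μ)
    (hlim : ∀ᵐ x ∂μ, Tendsto (fun n => f n x) atTop (𝓝 (g x)))
    (hB : ∀ n, ∫⁻ x, ‖f n x‖ₑ ^ p ∂μ ≤ B) :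
    ∫⁻ x, ‖g x‖ₑ ^ p ∂μ ≤ B :=
  calc ∫⁻ x, ‖g x‖ₑ ^ p ∂μ = ∫⁻ x, liminf (fun n => ‖f n x‖ₑ ^ p) atTop ∂μ :=
        lintegral_congr_ae <| hlim.mono fun _ hx =>
          ((ENNReal.continuous_rpow_const.tendsto _).comp hx.enorm).liminf_eq.symm
    _ ≤ liminf (fun n => ∫⁻ x, ‖f n x‖ₑ ^ p ∂μ) atTop :=
        lintegral_liminf_le' fun n => (hf n).enorm.pow_const p
    _ ≤ B := liminf_le_of_frequently_le' (Frequently.of_forall hB)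

end MeasureTheory

namespace ProbabilityTheory

variable {Ω : Type*} [MeasurableSpace Ω] {P : Measure Ω} [IsProbabilityMeasure P] {p : ℝ}

theorem integral_abs_add_rpow_le (hp1 : 1 < p) (hp2 : p ≤ 2) {X Y : Ω → ℝ}
    (hXY : IndepFun X Y P) (hX : MemLp X (ENNReal.ofReal p) P) (hY : MemLp Y (ENNReal.ofReal p) P)
    (hY0 : P[Y] = 0) :
    ∫ ω, |X ω + Y ω| ^ p ∂P ≤ ∫ ω, |X ω| ^ p ∂P + 2 * p * ∫ ω, |Y ω| ^ p ∂P := by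
  set g : ℝ → ℝ := fun x => p * |x| ^ (p - 2) * x
  have hg : Measurable g := by fun_prop
  have hXp := hX.integrable_abs_rpow (by linarith)
  have hYp := (hY.integrable_abs_rpow (by linarith)).const_mul (2 * p)
  have hgX := (hg.comp_aemeasurable hX.aemeasurable).aestronglyMeasurable
  have hlin_int : Integrable (fun ω => g (X ω) * Y ω) P :=
    (hXp.add hYp).mono' (hgX.mul hY.1)
      (ae_of_all _ fun ω => abs_mul_abs_rpow_sub_two_mul_le hp1 hp2 (X ω) (Y ω))
  have hlin : ∫ ω, g (X ω) * Y ω ∂P = 0 :=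
    ((hXY.comp hg measurable_id).integral_fun_mul_eq_mul_integral hgX hY.1).trans
      (by simp [hY0])
  calc ∫ ω, |X ω + Y ω| ^ p ∂P
      ≤ ∫ ω, |X ω| ^ p + g (X ω) * Y ω + 2 * p * |Y ω| ^ p ∂P :=
        integral_mono ((hX.add hY).integrable_abs_rpow (by linarith))
          ((hXp.add hlin_int).add hYp) fun ω => abs_add_rpow_le hp1 hp2 (X ω) (Y ω)
    _ = ∫ ω, |X ω| ^ p ∂P + 2 * p * ∫ ω, |Y ω| ^ p ∂P := by
        rw [integral_add (f := fun ω => |X ω| ^ p + g (X ω) * Y ω) (hXp.add hlin_int) hYp,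
          integral_add hXp hlin_int, hlin, add_zero, integral_const_mul]

theorem integral_abs_sum_rpow_le {ι : Type*} (hp1 : 1 < p) (hp2 : p ≤ 2) {X : ι → Ω → ℝ}
    (hind : iIndepFun X P) (hX : ∀ i, MemLp (X i) (ENNReal.ofReal p) P) (hX0 : ∀ i, P[X i] = 0)
    (s : Finset ι) :
    ∫ ω, |∑ i ∈ s, X i ω| ^ p ∂P ≤ 2 * p * ∑ i ∈ s, ∫ ω, |X i ω| ^ p ∂P := by
  classical
  induction s using Finset.induction_on with
  | empty => simp [zero_rpow (by linarith : p ≠ 0)]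
  | insert i s hi ih =>
    have hindep : IndepFun (fun ω => ∑ j ∈ s, X j ω) (X i) P := by
      simpa [Finset.sum_fn] using
        hind.indepFun_finsetSum_of_notMem₀ (fun j => (hX j).aemeasurable) hi
    have hmem := memLp_finsetSum s fun j _ => hX j
    simp_rw [Finset.sum_insert hi, add_comm (X i _)]
    linarith [integral_abs_add_rpow_le hp1 hp2 hindep hmem (hX i) (hX0 i)]

theorem lintegral_enorm_sum_mul_rpow_le {ι : Type*} (hp1 : 1 < p) (hp2 : p ≤ 2)
    {ε : ι → Ω → ℝ} {ξ : Ω → ℝ} (hind : iIndepFun ε P) (hid : ∀ i, IdentDistrib (ε i) ξ P P)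
    (hξ : MemLp ξ (ENNReal.ofReal p) P) (hξ0 : P[ξ] = 0) (a : ι → ℝ) (s : Finset ι) :
    ∫⁻ ω, ‖∑ i ∈ s, a i * ε i ω‖ₑ ^ p ∂P ≤
      ENNReal.ofReal (2 * p * (∫ ω, |ξ ω| ^ p ∂P) * ∑ i ∈ s, |a i| ^ p) := by
  have hmem : ∀ i, MemLp (fun ω => a i * ε i ω) (ENNReal.ofReal p) P := fun i =>
    ((hid i).memLp_iff.2 hξ).const_mul (a i)
  have hcent : ∀ i, ∫ ω, a i * ε i ω ∂P = 0 := fun i => by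
    rw [integral_const_mul, (hid i).integral_eq, hξ0, mul_zero]
  have hmoment : ∀ i, ∫ ω, |a i * ε i ω| ^ p ∂P = |a i| ^ p * ∫ ω, |ξ ω| ^ p ∂P := fun i => by
    simp_rw [abs_mul, mul_rpow (abs_nonneg _) (abs_nonneg _)]
    rw [integral_const_mul]
    congr 1
    exact ((hid i).comp (by fun_prop : Measurable fun x : ℝ => |x| ^ p)).integral_eq
  have hind' : iIndepFun (fun i ω => a i * ε i ω) P :=
    hind.comp (fun i x => a i * x) fun i => measurable_const_mul (a i)
  rw [← ofReal_integral_abs_rpow (by linarith)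
    ((memLp_finsetSum s fun i _ => hmem i).integrable_abs_rpow (by linarith))]
  gcongr
  calc ∫ ω, |∑ i ∈ s, a i * ε i ω| ^ p ∂P
      ≤ 2 * p * ∑ i ∈ s, ∫ ω, |a i * ε i ω| ^ p ∂P :=
        integral_abs_sum_rpow_le hp1 hp2 hind' hmem hcent s
    _ = 2 * p * (∫ ω, |ξ ω| ^ p ∂P) * ∑ i ∈ s, |a i| ^ p := by
        simp_rw [hmoment, ← Finset.sum_mul]; ring

end ProbabilityTheory

theorem tail_series_moment_bound_general
    {Ω : Type*} [MeasurableSpace Ω] (P : Measure Ω) [IsProbabilityMeasure P]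
    (p d : ℝ) (hp1 : 1 < p) (hp2 : p ≤ 2)
    (hdp : 1 < (1 - d) * p)
    (ε : ℕ → Ω → ℝ) (hmeas : ∀ i, Measurable (ε i))
    (hindep : iIndepFun ε P)
    (hident : ∀ i, Measure.map (ε i) P = Measure.map (ε 1) P)
    (hcent : ∫ ω, ε 1 ω ∂P = 0)
    (hLp : ∫⁻ ω, (‖ε 1 ω‖₊ : ℝ≥0∞) ^ p ∂P < ⊤)
    (C₀ : ℝ)
    (a : ℕ → ℝ) (ha : ∀ i : ℕ, 1 ≤ i → |a i| ≤ C₀ * (i : ℝ) ^ (-(1 - d)))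
    (S : ℕ → Ω → ℝ)
    (hS : ∀ k : ℕ, ∀ᵐ ω ∂P,
      Tendsto (fun m => ∑ i ∈ Finset.Icc (k + 1) m, a i * ε i ω) atTop (nhds (S k ω))) :
    ∃ C > 0, ∀ k : ℕ, 1 ≤ k →
      ∫⁻ ω, (‖S k ω‖₊ : ℝ≥0∞) ^ p ∂P ≤
        ENNReal.ofReal (C * (k : ℝ) ^ (1 - (1 - d) * p)) := by
  set q := (1 - d) * p
  have hp0 : 0 < p := by linarith
  have hC₀ : 0 ≤ C₀ := by simpa using (abs_nonneg (a 1)).trans (ha 1 le_rfl)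
  have hid : ∀ i, IdentDistrib (ε i) (ε 1) P P := fun i =>
    ⟨(hmeas i).aemeasurable, (hmeas 1).aemeasurable, hident i⟩
  have hε1 : MemLp (ε 1) (ENNReal.ofReal p) P :=
    ⟨(hmeas 1).aestronglyMeasurable, (eLpNorm_lt_top_iff_lintegral_rpow_enorm_lt_top
      (by simpa using hp0) ENNReal.ofReal_ne_top).2 (by simpa [hp0.le, enorm_eq_nnnorm] using hLp)⟩
  set M := 2 * p * ∫ ω, |ε 1 ω| ^ p ∂P
  have hMC : 0 ≤ M * C₀ ^ p / (q - 1) :=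
    div_nonneg (mul_nonneg (by positivity) (rpow_nonneg hC₀ p)) (by linarith)
  refine ⟨M * C₀ ^ p / (q - 1) + 1, by linarith, fun k hk => ?_⟩
  refine lintegral_enorm_rpow_le_of_ae_tendsto (fun m => by fun_prop) (hS k) fun m => ?_
  refine (lintegral_enorm_sum_mul_rpow_le hp1 hp2 hindep hid hε1 hcent a _).trans
    (ENNReal.ofReal_le_ofReal ?_)
  have hK : 0 ≤ (k : ℝ) ^ (1 - q) := by positivity
  calc M * ∑ i ∈ Finset.Icc (k + 1) m, |a i| ^ p
      ≤ M * (C₀ ^ p * ((k : ℝ) ^ (1 - q) / (q - 1))) := by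
        gcongr
        exact sum_Icc_abs_rpow_le hp0.le hdp hC₀ ha hk m
    _ = M * C₀ ^ p / (q - 1) * (k : ℝ) ^ (1 - q) := by ring
    _ ≤ (M * C₀ ^ p / (q - 1) + 1) * (k : ℝ) ^ (1 - q) := by linarith

/-- Tail-series moment bound for long-memory linear processes (equation (2.2:2) of the
paper): under i.i.d. centered innovations with `E|ε|^p < ∞` and coefficients
`|a_i| ≤ C₀ i^{-(1-d)}` with `(1-d)p > 1`, the tails `S_k = ∑_{i>k} a_i ε_i` satisfy
`E|S_k|^p ≤ C k^{1-(1-d)p}`. -/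
theorem tail_series_moment_bound
    {Ω : Type*} [MeasurableSpace Ω] (P : Measure Ω) [IsProbabilityMeasure P]
    (p d : ℝ) (hp1 : 1 < p) (hp2 : p ≤ 2) (hd0 : 0 < d) (hd1 : d < 1)
    (hdp : 1 < (1 - d) * p)
    (ε : ℕ → Ω → ℝ) (hmeas : ∀ i, Measurable (ε i))
    (hindep : iIndepFun ε P)
    (hident : ∀ i, Measure.map (ε i) P = Measure.map (ε 1) P)
    (hcent : ∫ ω, ε 1 ω ∂P = 0)
    (hLp : ∫⁻ ω, (‖ε 1 ω‖₊ : ℝ≥0∞) ^ p ∂P < ⊤)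
    (C₀ : ℝ) (hC₀ : 0 < C₀)
    (a : ℕ → ℝ) (ha : ∀ i : ℕ, 1 ≤ i → |a i| ≤ C₀ * (i : ℝ) ^ (-(1 - d)))
    (S : ℕ → Ω → ℝ) (hSmeas : ∀ k, Measurable (S k))
    (hS : ∀ k : ℕ, ∀ᵐ ω ∂P,
      Tendsto (fun m => ∑ i ∈ Finset.Icc (k + 1) m, a i * ε i ω) atTop (nhds (S k ω))) :
    ∃ C > 0, ∀ k : ℕ, 1 ≤ k →
      ∫⁻ ω, (‖S k ω‖₊ : ℝ≥0∞) ^ p ∂P ≤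
        ENNReal.ofReal (C * (k : ℝ) ^ (1 - (1 - d) * p)) :=
  tail_series_moment_bound_general P p d hp1 hp2 hdp ε hmeas hindep hident hcent hLp C₀ a ha S hS
end

section
/- Let d ∈ (0,1), γ ∈ (0, d/(1−d)) and r > 1/(1−d). Then there exists a constant C > 0, depending only on γ, d and r, such that for all integers n ≥ 1, ∑_{k∈ℤ, k≤n} ( ∑_{t=max(k,1)}^n c_{t−k} )^r ≤ C · n^{r+1−(1−d)(1+γ)r}, where c_0 := 1 and c_j := j^{−(1−d)(1+γ)} for integers j ≥ 1. -/
/-!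
Put `a = (1 - d)(1 + γ)`, so that `0 < a < 1` and `a r > 1`, and index the outer sum by
`m = n - k ≥ 0`. For `m ≤ 2n` the inner sum is at most `∑_{j ≤ m} c_j ≤ 1 + m^{1-a}/(1-a)`,
which is `O(n^{1-a})`, so these `2n` terms contribute `O(n^{(1-a)r + 1})`. For `m = 2n + i` every
index `t - k` is at least `n + i + 1`, so the inner sum is at most `n (n + i + 1)^{-a}` and the
remaining terms contribute at most `n^r ∑_i (n + i + 1)^{-ar} ≤ n^{r + 1 - ar}/(ar - 1)`.
Both power sums are bounded by telescoping, the increments of `x ↦ x^s` being compared with the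
derivative at the right endpoint.
-/

open Finset

namespace Real

theorem mul_rpow_sub_one_mul_sub_le_rpow_sub_rpow {s x y : ℝ} (hs0 : 0 ≤ s) (hs1 : s ≤ 1)
    (hx : 0 ≤ x) (hxy : x ≤ y) : s * y ^ (s - 1) * (y - x) ≤ y ^ s - x ^ s := by
  refine (convex_Icc x y).mul_sub_le_image_sub_of_le_deriv (f := fun t => t ^ s)
    (continuousOn_id.rpow_const fun _ _ => Or.inr hs0) ?_ ?_ x (Set.left_mem_Icc.2 hxy) y
    (Set.right_mem_Icc.2 hxy) hxy <;> rw [interior_Icc] <;> intro t ht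
  · exact (hasDerivAt_rpow_const (Or.inl (hx.trans_lt ht.1).ne')).differentiableAt
      |>.differentiableWithinAt
  · rw [deriv_rpow_const]
    exact mul_le_mul_of_nonneg_left
      (rpow_le_rpow_of_nonpos (hx.trans_lt ht.1) ht.2.le (by linarith)) hs0

theorem rpow_sub_rpow_le_mul_rpow_sub_one_mul_sub {s x y : ℝ} (hs : s ≤ 0)
    (hx : 0 < x) (hxy : x ≤ y) : y ^ s - x ^ s ≤ s * y ^ (s - 1) * (y - x) := by
  refine (convex_Icc x y).image_sub_le_mul_sub_of_deriv_le (f := fun t => t ^ s)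
    (continuousOn_id.rpow_const fun t ht => Or.inl (hx.trans_le ht.1).ne') ?_ ?_ x
    (Set.left_mem_Icc.2 hxy) y (Set.right_mem_Icc.2 hxy) hxy <;> rw [interior_Icc] <;> intro t ht
  · exact (hasDerivAt_rpow_const (Or.inl (hx.trans ht.1).ne')).differentiableAt
      |>.differentiableWithinAt
  · rw [deriv_rpow_const]
    exact mul_le_mul_of_nonpos_left
      (rpow_le_rpow_of_nonpos (hx.trans ht.1) ht.2.le (by linarith)) hs

end Real

theorem sum_range_add_one_rpow_neg_le {a : ℝ} (ha0 : 0 ≤ a) (ha1 : a < 1) (N : ℕ) :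
    ∑ j ∈ range N, ((j : ℝ) + 1) ^ (-a) ≤ (N : ℝ) ^ (1 - a) / (1 - a) := by
  have hb : 0 < 1 - a := by linarith
  rw [le_div_iff₀ hb, sum_mul]
  calc ∑ j ∈ range N, ((j : ℝ) + 1) ^ (-a) * (1 - a)
      ≤ ∑ j ∈ range N, (((j + 1 : ℕ) : ℝ) ^ (1 - a) - (j : ℝ) ^ (1 - a)) := by
        gcongr with j
        have h := Real.mul_rpow_sub_one_mul_sub_le_rpow_sub_rpow hb.le (by linarith)
          (Nat.cast_nonneg j) (le_add_of_nonneg_right zero_le_one)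
        rw [sub_sub_cancel_left, add_sub_cancel_left, mul_one] at h
        push_cast
        linarith
    _ = (N : ℝ) ^ (1 - a) := by
        rw [sum_range_sub (fun j : ℕ => (j : ℝ) ^ (1 - a)), Nat.cast_zero, Real.zero_rpow hb.ne',
          sub_zero]

theorem sum_range_add_rpow_neg_le {p M : ℝ} (hp : 1 < p) (hM : 0 < M) (N : ℕ) :
    ∑ i ∈ range N, ((i : ℝ) + M + 1) ^ (-p) ≤ M ^ (1 - p) / (p - 1) := by
  have hp1 : 0 < p - 1 := by linarith
  rw [le_div_iff₀ hp1, sum_mul]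
  calc ∑ i ∈ range N, ((i : ℝ) + M + 1) ^ (-p) * (p - 1)
      ≤ ∑ i ∈ range N, (((i : ℝ) + M) ^ (1 - p) - (((i + 1 : ℕ) : ℝ) + M) ^ (1 - p)) := by
        gcongr with i
        have h := Real.rpow_sub_rpow_le_mul_rpow_sub_one_mul_sub (s := 1 - p) (by linarith)
          (by positivity : 0 < (i : ℝ) + M) (le_add_of_nonneg_right zero_le_one)
        rw [sub_sub_cancel_left, add_sub_cancel_left, mul_one] at h
        push_cast
        rw [add_right_comm (i : ℝ) 1 M]
        linarith
    _ ≤ M ^ (1 - p) := by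
        rw [sum_range_sub' (fun i : ℕ => ((i : ℝ) + M) ^ (1 - p)), Nat.cast_zero, zero_add,
          sub_le_self_iff]
        positivity

theorem tsum_subtype_int_le_eq_tsum_nat {α : Type*} [AddCommMonoid α] [TopologicalSpace α]
    (n : ℤ) (f : ℤ → α) : ∑' k : {k : ℤ // k ≤ n}, f k = ∑' m : ℕ, f (n - m) :=
  let e : ℕ ≃ {k : ℤ // k ≤ n} :=
    { toFun := fun m => ⟨n - m, by omega⟩
      invFun := fun k => (n - k).toNat
      left_inv := fun m => by simp only; omega
      right_inv := fun k => Subtype.ext (by have := k.2; simp only; omega) }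
  (e.tsum_eq fun k => f k).symm

-- `c_j` of the paper: `c_0` is set by hand because `(0 : ℝ) ^ (-a)` is a junk value.
noncomputable def powerWeight (a : ℝ) (j : ℤ) : ℝ := if j = 0 then 1 else (j : ℝ) ^ (-a)

noncomputable def convSum (a : ℝ) (n : ℕ) (k : ℤ) : ℝ :=
  ∑ t ∈ Icc (max k 1) (n : ℤ), powerWeight a (t - k)

theorem powerWeight_sub (a : ℝ) (t k : ℤ) :
    powerWeight a (t - k) = if t = k then 1 else ((t - k : ℤ) : ℝ) ^ (-a) := by
  simp only [powerWeight, sub_eq_zero]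

theorem powerWeight_nonneg (a : ℝ) {j : ℤ} (hj : 0 ≤ j) : 0 ≤ powerWeight a j := by
  unfold powerWeight
  split_ifs
  · exact zero_le_one
  · exact Real.rpow_nonneg (Int.cast_nonneg hj) _

theorem convSum_nonneg (a : ℝ) (n : ℕ) (k : ℤ) : 0 ≤ convSum a n k :=
  sum_nonneg fun _ ht => powerWeight_nonneg a (by simp only [mem_Icc] at ht; omega)

section
variable {a r : ℝ}

theorem powerWeight_le_rpow_neg (ha : 0 ≤ a) {i j : ℤ} (hi : 0 < i) (hij : i ≤ j) :
    powerWeight a j ≤ (i : ℝ) ^ (-a) := by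
  rw [powerWeight, if_neg (by omega)]
  exact Real.rpow_le_rpow_of_nonpos (Int.cast_pos.2 hi) (Int.cast_le.2 hij) (neg_nonpos.2 ha)

theorem sum_range_powerWeight_le (ha0 : 0 ≤ a) (ha1 : a < 1) (m : ℕ) :
    ∑ j ∈ range (m + 1), powerWeight a j ≤ 1 + (m : ℝ) ^ (1 - a) / (1 - a) := by
  rw [sum_range_succ', add_comm]
  gcongr
  · simp [powerWeight]
  · refine (sum_le_sum fun j _ => ?_).trans (sum_range_add_one_rpow_neg_le ha0 ha1 m)
    simp [powerWeight, Nat.cast_add_one_ne_zero]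

theorem convSum_sub_le (ha0 : 0 ≤ a) (ha1 : a < 1) (n m : ℕ) :
    convSum a n (n - m) ≤ 1 + (m : ℝ) ^ (1 - a) / (1 - a) := by
  calc convSum a n (n - m) ≤ ∑ t ∈ Icc ((n : ℤ) - m) n, powerWeight a (t - (n - m)) :=
        sum_le_sum_of_subset_of_nonneg (Icc_subset_Icc_left (le_max_left _ _))
          fun t ht _ => powerWeight_nonneg a (by simp only [mem_Icc] at ht; omega)
    _ = ∑ j ∈ range (m + 1), powerWeight a j := by
        rw [Int.Icc_eq_finset_map, sum_map, show ((n : ℤ) + 1 - (n - m)).toNat = m + 1 by omega]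
        simp
    _ ≤ 1 + (m : ℝ) ^ (1 - a) / (1 - a) := sum_range_powerWeight_le ha0 ha1 m

theorem convSum_le_of_nonpos (ha : 0 ≤ a) (n : ℕ) {k : ℤ} (hk : k ≤ 0) :
    convSum a n k ≤ n * ((1 - k : ℤ) : ℝ) ^ (-a) := by
  rw [convSum, max_eq_right (by omega)]
  refine (sum_le_card_nsmul _ _ (((1 - k : ℤ) : ℝ) ^ (-a)) fun t ht => ?_).trans_eq ?_
  · exact powerWeight_le_rpow_neg ha (by omega) (by simp only [mem_Icc] at ht; omega)
  · simp [nsmul_eq_mul]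

theorem convSum_sub_le_mul_rpow (ha0 : 0 ≤ a) (ha1 : a < 1) {n m : ℕ} (hn : 1 ≤ n)
    (hm : m ≤ 2 * n) : convSum a n (n - m) ≤ 3 / (1 - a) * (n : ℝ) ^ (1 - a) := by
  have hb : 0 < 1 - a := by linarith
  have hn1 : 1 ≤ (n : ℝ) ^ (1 - a) := Real.one_le_rpow (by exact_mod_cast hn) hb.le
  have hm2 : (m : ℝ) ^ (1 - a) ≤ 2 * (n : ℝ) ^ (1 - a) :=
    calc (m : ℝ) ^ (1 - a) ≤ (2 * n : ℝ) ^ (1 - a) :=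
          Real.rpow_le_rpow (Nat.cast_nonneg m) (by exact_mod_cast hm) hb.le
      _ = (2 : ℝ) ^ (1 - a) * (n : ℝ) ^ (1 - a) := Real.mul_rpow zero_le_two (Nat.cast_nonneg n)
      _ ≤ 2 * (n : ℝ) ^ (1 - a) := by
          gcongr
          exact Real.rpow_le_self_of_one_le one_le_two (by linarith)
  calc convSum a n (n - m) ≤ 1 + (m : ℝ) ^ (1 - a) / (1 - a) := convSum_sub_le ha0 ha1 n m
    _ ≤ (n : ℝ) ^ (1 - a) / (1 - a) + 2 * (n : ℝ) ^ (1 - a) / (1 - a) := by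
        gcongr
        rw [le_div_iff₀ hb]
        linarith
    _ = 3 / (1 - a) * (n : ℝ) ^ (1 - a) := by ring

theorem sum_range_ofReal_convSum_rpow_le (ha0 : 0 ≤ a) (ha1 : a < 1) (hr : 0 ≤ r) {n : ℕ}
    (hn : 1 ≤ n) :
    ∑ m ∈ range (2 * n), ENNReal.ofReal (convSum a n (n - m) ^ r) ≤
      ENNReal.ofReal (2 * (3 / (1 - a)) ^ r * (n : ℝ) ^ (r + 1 - a * r)) := by
  rw [← ENNReal.ofReal_sum_of_nonneg fun _ _ => Real.rpow_nonneg (convSum_nonneg a n _) r]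
  refine ENNReal.ofReal_le_ofReal ?_
  have hb : 0 < 1 - a := by linarith
  have hn0 : (0 : ℝ) ≤ n := Nat.cast_nonneg n
  calc ∑ m ∈ range (2 * n), convSum a n (n - m) ^ r
      ≤ ∑ m ∈ range (2 * n), (3 / (1 - a) * (n : ℝ) ^ (1 - a)) ^ r :=
        sum_le_sum fun m hm => Real.rpow_le_rpow (convSum_nonneg a n _)
          (convSum_sub_le_mul_rpow ha0 ha1 hn (mem_range.1 hm).le) hr
    _ = 2 * (3 / (1 - a)) ^ r * (n : ℝ) ^ (r + 1 - a * r) := by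
        rw [sum_const, card_range, nsmul_eq_mul, Real.mul_rpow (by positivity) (by positivity),
          ← Real.rpow_mul hn0, show r + 1 - a * r = (1 - a) * r + 1 by ring,
          Real.rpow_add_one' hn0 (by nlinarith)]
        push_cast
        ring

theorem convSum_tail_rpow_le (ha : 0 ≤ a) (hr : 0 ≤ r) (n i : ℕ) :
    convSum a n (n - (i + 2 * n : ℕ)) ^ r ≤ (n : ℝ) ^ r * ((i : ℝ) + n + 1) ^ (-(a * r)) := by
  have hx : (0 : ℝ) ≤ (i : ℝ) + n + 1 := by positivity
  have hk := convSum_le_of_nonpos ha n (k := n - (i + 2 * n : ℕ)) (by omega)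
  rw [show ((1 - (n - (i + 2 * n : ℕ)) : ℤ) : ℝ) = (i : ℝ) + n + 1 by push_cast; ring] at hk
  calc convSum a n (n - (i + 2 * n : ℕ)) ^ r ≤ ((n : ℝ) * ((i : ℝ) + n + 1) ^ (-a)) ^ r :=
        Real.rpow_le_rpow (convSum_nonneg a n _) hk hr
    _ = (n : ℝ) ^ r * ((i : ℝ) + n + 1) ^ (-(a * r)) := by
        rw [Real.mul_rpow (Nat.cast_nonneg n) (Real.rpow_nonneg hx _), ← Real.rpow_mul hx,
          neg_mul]

theorem tsum_ofReal_convSum_tail_rpow_le (ha : 0 ≤ a) (har : 1 < a * r) (hr : 0 ≤ r) {n : ℕ}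
    (hn : 1 ≤ n) :
    ∑' i : ℕ, ENNReal.ofReal (convSum a n (n - (i + 2 * n : ℕ)) ^ r) ≤
      ENNReal.ofReal ((n : ℝ) ^ (r + 1 - a * r) / (a * r - 1)) := by
  refine ENNReal.tsum_le_of_sum_range_le fun L => ?_
  rw [← ENNReal.ofReal_sum_of_nonneg fun _ _ => Real.rpow_nonneg (convSum_nonneg a n _) r]
  refine ENNReal.ofReal_le_ofReal ?_
  have hn0 : (0 : ℝ) < n := by exact_mod_cast hn
  calc ∑ i ∈ range L, convSum a n (n - (i + 2 * n : ℕ)) ^ r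
      ≤ (n : ℝ) ^ r * ∑ i ∈ range L, ((i : ℝ) + n + 1) ^ (-(a * r)) := by
        rw [mul_sum]
        exact sum_le_sum fun i _ => convSum_tail_rpow_le ha hr n i
    _ ≤ (n : ℝ) ^ r * ((n : ℝ) ^ (1 - a * r) / (a * r - 1)) := by
        gcongr
        exact sum_range_add_rpow_neg_le har hn0 L
    _ = (n : ℝ) ^ (r + 1 - a * r) / (a * r - 1) := by
        rw [show r + 1 - a * r = r + (1 - a * r) by ring, Real.rpow_add hn0]
        ring

theorem tsum_ofReal_convSum_rpow_le (ha0 : 0 ≤ a) (ha1 : a < 1) (har : 1 < a * r) {n : ℕ}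
    (hn : 1 ≤ n) :
    ∑' k : {k : ℤ // k ≤ n}, ENNReal.ofReal (convSum a n k ^ r) ≤
      ENNReal.ofReal ((2 * (3 / (1 - a)) ^ r + 1 / (a * r - 1)) * (n : ℝ) ^ (r + 1 - a * r)) := by
  have hr : 0 ≤ r := by nlinarith
  rw [tsum_subtype_int_le_eq_tsum_nat (n : ℤ) fun k => ENNReal.ofReal (convSum a n k ^ r),
    ← ENNReal.summable.sum_add_tsum_nat_add' (k := 2 * n)]
  calc _ ≤ ENNReal.ofReal (2 * (3 / (1 - a)) ^ r * (n : ℝ) ^ (r + 1 - a * r)) +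
        ENNReal.ofReal ((n : ℝ) ^ (r + 1 - a * r) / (a * r - 1)) :=
        add_le_add (sum_range_ofReal_convSum_rpow_le ha0 ha1 hr hn)
          (tsum_ofReal_convSum_tail_rpow_le ha0 har hr hn)
    _ = _ := by
        rw [← ENNReal.ofReal_add (by positivity) (div_nonneg (by positivity) (by linarith))]
        congr 1
        ring

end

theorem convolution_sum_bound_general (d γ r : ℝ) (hd1 : d < 1)
    (hγ0 : 0 < γ) (hγ : γ < d / (1 - d)) (hr : 1 / (1 - d) < r) :
    ∃ C > 0, ∀ n : ℕ, 1 ≤ n →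
      (∑' k : {k : ℤ // k ≤ (n : ℤ)},
        ENNReal.ofReal ((∑ t ∈ Finset.Icc (max k.1 1) (n : ℤ),
          (if t = k.1 then (1 : ℝ)
            else ((t - k.1 : ℤ) : ℝ) ^ (-(1 - d) * (1 + γ)))) ^ r))
        ≤ ENNReal.ofReal (C * (n : ℝ) ^ (r + 1 - (1 - d) * (1 + γ) * r)) := by
  have h1d : 0 < 1 - d := by linarith
  set a := (1 - d) * (1 + γ)
  have ha0 : 0 < a := by positivity
  have ha1 : a < 1 := by nlinarith [(lt_div_iff₀ h1d).1 hγ]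
  have har : 1 < a * r := by nlinarith [(div_lt_iff₀ h1d).1 hr]
  have hb : 0 < 1 - a := by linarith
  refine ⟨2 * (3 / (1 - a)) ^ r + 1 / (a * r - 1),
    add_pos (by positivity) (one_div_pos.2 (by linarith)), fun n hn => ?_⟩
  simp only [neg_mul, ← powerWeight_sub]
  exact tsum_ofReal_convSum_rpow_le ha0.le ha1 har hn

/-- Analytic convolution-sum lemma (Lemma C.4 of the paper): for `d ∈ (0,1)`,
`0 < γ < d/(1-d)` and `r > 1/(1-d)`, with `c_0 = 1` and `c_j = j^{-(1-d)(1+γ)}` for `j ≥ 1`,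
one has `∑_{k ≤ n} (∑_{t=max(k,1)}^n c_{t-k})^r ≤ C n^{r+1-(1-d)(1+γ)r}`. -/
theorem convolution_sum_bound (d γ r : ℝ) (hd0 : 0 < d) (hd1 : d < 1)
    (hγ0 : 0 < γ) (hγ : γ < d / (1 - d)) (hr : 1 / (1 - d) < r) :
    ∃ C > 0, ∀ n : ℕ, 1 ≤ n →
      (∑' k : {k : ℤ // k ≤ (n : ℤ)},
        ENNReal.ofReal ((∑ t ∈ Finset.Icc (max k.1 1) (n : ℤ),
          (if t = k.1 then (1 : ℝ)
            else ((t - k.1 : ℤ) : ℝ) ^ (-(1 - d) * (1 + γ)))) ^ r))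
        ≤ ENNReal.ofReal (C * (n : ℝ) ^ (r + 1 - (1 - d) * (1 + γ) * r)) :=
  convolution_sum_bound_general d γ r hd1 hγ0 hγ hr
end

section
/- Let α ∈ (1,2] and d ∈ (0, 1−1/α). Define κ(γ,r) := 1 + 1/r − (1−d)(1+γ) on the compact domain D := {(γ,r) ∈ ℝ² : 1/(1−d) ≤ r ≤ α and 0 ≤ γ ≤ min(d/(1−d), 1 − 1/(r(1−d)), α/r − 1)}. Then κ attains its minimum over D at the unique point (γ₀, r₀), and the minimal value κ(γ₀, r₀) equals κ₀. -/
/-!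
In the coordinates `u = 1 / r`, `s = (1 - d) (1 + γ)` the domain `D` becomes a polygon cut out
by linear inequalities and `κ = 1 + u - s`, so minimizing `κ` is a two-variable linear program.
With `A = α (1 - d) > 1`, the minimum sits where the constraint `s ≤ A u` meets either `s ≤ 1`
(when `A (1 - 2d) > 1`) or `s ≤ 2 (1 - d) - u` (otherwise). In each case `u - s` minus its value
at that vertex is a combination, with positive weights, of the slacks of the two active
constraints; this gives the lower bound, and it forces both slacks to vanish at a minimizer,
which is uniqueness.
-/

noncomputable def kappa (d γ r : ℝ) : ℝ := 1 + 1 / r - (1 - d) * (1 + γ)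

def KappaDomain (α d γ r : ℝ) : Prop :=
  1 / (1 - d) ≤ r ∧ r ≤ α ∧ 0 ≤ γ ∧
    γ ≤ min (d / (1 - d)) (min (1 - 1 / (r * (1 - d))) (α / r - 1))

def IsUniqueKappaMin (α d γ₀ r₀ κ₀ : ℝ) : Prop :=
  KappaDomain α d γ₀ r₀ ∧ kappa d γ₀ r₀ = κ₀ ∧
    ∀ γ r, KappaDomain α d γ r → κ₀ ≤ kappa d γ r ∧ (kappa d γ r = κ₀ → γ = γ₀ ∧ r = r₀)

/-- The image of `KappaDomain α d` under `(γ, r) ↦ (1 / r, (1 - d) (1 + γ))`, with `β = 1 - d`. -/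
def ReducedDomain (α β u s : ℝ) : Prop :=
  u ≤ β ∧ 1 / α ≤ u ∧ β ≤ s ∧ s ≤ 1 ∧ s ≤ 2 * β - u ∧ s ≤ α * β * u

theorem kappaDomain_iff_of_pos {α d γ r : ℝ} (hα : 0 < α) (hd : d < 1) (hr : 0 < r) :
    KappaDomain α d γ r ↔ ReducedDomain α (1 - d) (1 / r) ((1 - d) * (1 + γ)) := by
  have hβ : 0 < 1 - d := sub_pos.2 hd
  unfold KappaDomain ReducedDomain
  simp only [le_min_iff]
  refine and_congr (one_div_le hβ hr) (and_congr (one_div_le_one_div hα hr).symm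
    (and_congr ?_ (and_congr ?_ (and_congr ?_ ?_))))
  · rw [le_mul_iff_one_le_right hβ, le_add_iff_nonneg_right]
  · rw [le_div_iff₀ hβ]
    constructor <;> intro h <;> linarith
  · rw [← div_div, le_sub_comm, div_le_iff₀ hβ]
    constructor <;> intro h <;> linarith
  · rw [le_sub_iff_add_le, show α * (1 - d) * (1 / r) = (1 - d) * (α / r) by ring,
      mul_le_mul_iff_right₀ hβ, add_comm]

theorem kappaDomain_iff {α d γ r : ℝ} (hα : 0 < α) (hd : d < 1) :
    KappaDomain α d γ r ↔ ReducedDomain α (1 - d) (1 / r) ((1 - d) * (1 + γ)) := by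
  have hβ : 0 < 1 - d := sub_pos.2 hd
  refine ⟨fun h => ?_, fun h => ?_⟩
  · exact (kappaDomain_iff_of_pos hα hd ((one_div_pos.2 hβ).trans_le h.1)).1 h
  · exact (kappaDomain_iff_of_pos hα hd (one_div_pos.1 ((one_div_pos.2 hα).trans_le h.2.1))).2 h

theorem isUniqueKappaMin_of_reduced {α d γ₀ r₀ κ₀ u₀ s₀ : ℝ} (hα : 0 < α) (hd : d < 1)
    (hu₀ : 1 / r₀ = u₀) (hs₀ : (1 - d) * (1 + γ₀) = s₀) (hκ₀ : κ₀ = 1 + u₀ - s₀)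
    (h₀ : ReducedDomain α (1 - d) u₀ s₀)
    (hmin : ∀ u s, ReducedDomain α (1 - d) u s →
      u₀ - s₀ ≤ u - s ∧ (u - s = u₀ - s₀ → u = u₀ ∧ s = s₀)) :
    IsUniqueKappaMin α d γ₀ r₀ κ₀ := by
  have hβ : (1 - d) ≠ 0 := (sub_pos.2 hd).ne'
  refine ⟨(kappaDomain_iff hα hd).2 (hu₀ ▸ hs₀ ▸ h₀), by rw [kappa, hu₀, hs₀, hκ₀], ?_⟩
  intro γ r hD
  obtain ⟨hle, heq⟩ := hmin _ _ ((kappaDomain_iff hα hd).1 hD)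
  refine ⟨by rw [kappa]; linarith, fun h => ?_⟩
  obtain ⟨hu, hs⟩ := heq (by rw [kappa] at h; linarith)
  refine ⟨?_, by simpa using hu.trans hu₀.symm⟩
  linarith [mul_left_cancel₀ hβ (hs.trans hs₀.symm)]

theorem eq_zero_and_eq_zero_of_pos_mul_add_pos_mul_eq_zero {R : Type*} [Semiring R]
    [LinearOrder R] [IsStrictOrderedRing R] {a b p q : R} (ha : 0 < a) (hb : 0 < b)
    (hp : 0 ≤ p) (hq : 0 ≤ q) (h : a * p + b * q = 0) : p = 0 ∧ q = 0 := by
  obtain ⟨hap, hbq⟩ := (add_eq_zero_iff_of_nonneg (mul_nonneg ha.le hp) (mul_nonneg hb.le hq)).1 h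
  exact ⟨(not_lt.1 fun hp' => (mul_pos ha hp').ne' hap).antisymm hp,
    (not_lt.1 fun hq' => (mul_pos hb hq').ne' hbq).antisymm hq⟩

theorem le_sub_of_le_one_of_le_mul {A u s : ℝ} (hA : 1 < A) (h1 : s ≤ 1) (hA' : s ≤ A * u) :
    1 / A - 1 ≤ u - s ∧ (u - s = 1 / A - 1 → u = 1 / A ∧ s = 1) := by
  have hA0 : 0 < A := by linarith
  have hw : 0 < 1 - 1 / A := by rw [sub_pos, div_lt_one hA0]; exact hA
  have key : u - s - (1 / A - 1) = 1 / A * (A * u - s) + (1 - 1 / A) * (1 - s) := by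
    field_simp; ring
  have hslack₁ : 0 ≤ A * u - s := by linarith
  have hslack₂ : 0 ≤ 1 - s := by linarith
  refine ⟨?_, fun h => ?_⟩
  · linarith [mul_nonneg (one_div_pos.2 hA0).le hslack₁, mul_nonneg hw.le hslack₂]
  obtain ⟨hu, hs⟩ := eq_zero_and_eq_zero_of_pos_mul_add_pos_mul_eq_zero (one_div_pos.2 hA0) hw
    hslack₁ hslack₂ (by linarith)
  refine ⟨?_, by linarith⟩
  rw [eq_div_iff hA0.ne']
  linarith

theorem le_sub_of_le_sub_of_le_mul {A b u s : ℝ} (hA : 1 < A) (hb : s ≤ b - u)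
    (hA' : s ≤ A * u) :
    b / (A + 1) - A * (b / (A + 1)) ≤ u - s ∧
      (u - s = b / (A + 1) - A * (b / (A + 1)) → u = b / (A + 1) ∧ s = A * (b / (A + 1))) := by
  have hA1 : 0 < A + 1 := by linarith
  have hw₁ : 0 < 2 / (A + 1) := by positivity
  have hw₂ : 0 < (A - 1) / (A + 1) := div_pos (by linarith) hA1
  have key : u - s - (b / (A + 1) - A * (b / (A + 1))) =
      2 / (A + 1) * (A * u - s) + (A - 1) / (A + 1) * (b - u - s) := by
    field_simp; ring
  have hslack₁ : 0 ≤ A * u - s := by linarith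
  have hslack₂ : 0 ≤ b - u - s := by linarith
  refine ⟨?_, fun h => ?_⟩
  · linarith [mul_nonneg hw₁.le hslack₁, mul_nonneg hw₂.le hslack₂]
  obtain ⟨hAu, hbu⟩ := eq_zero_and_eq_zero_of_pos_mul_add_pos_mul_eq_zero hw₁ hw₂
    hslack₁ hslack₂ (by linarith)
  have hu : u = b / (A + 1) := by rw [eq_div_iff hA1.ne']; linarith
  exact ⟨hu, by rw [← hu]; linarith⟩

theorem isUniqueKappaMin_of_one_lt {α d : ℝ} (hα : 0 < α) (hd : 0 ≤ d) (hA : 1 < α * (1 - d))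
    (h : 1 < α * (1 - d) * (1 - 2 * d)) :
    IsUniqueKappaMin α d (d / (1 - d)) (α * (1 - d)) (1 / (α * (1 - d))) := by
  have hβ : 0 < 1 - d := pos_of_mul_pos_right (by linarith) hα.le
  have hA0 : 0 < α * (1 - d) := by linarith
  refine isUniqueKappaMin_of_reduced hα (by linarith) rfl (s₀ := 1) (by field_simp; ring) (by ring)
    ⟨?_, ?_, by linarith, le_rfl, ?_, by rw [mul_one_div_cancel hA0.ne']⟩ fun u s hR => ?_
  · rw [div_le_iff₀ hA0]
    nlinarith [mul_nonneg hA0.le hd]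
  · exact one_div_le_one_div_of_le hA0 (by nlinarith [mul_nonneg hα.le hd])
  · have : 1 / (α * (1 - d)) ≤ 1 - 2 * d := by rw [div_le_iff₀ hA0]; linarith
    linarith
  · obtain ⟨-, -, -, hs1, -, hsA⟩ := hR
    exact le_sub_of_le_one_of_le_mul hA hs1 hsA

theorem isUniqueKappaMin_of_le_one {α d : ℝ} (hα : 0 < α) (hA : 1 < α * (1 - d))
    (h : α * (1 - d) * (1 - 2 * d) ≤ 1) :
    IsUniqueKappaMin α d ((α * (1 - d) - 1) / (α * (1 - d) + 1)) ((1 / (1 - d) + α) / 2)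
      (d + (1 - d) * (3 - α * (1 - d)) / (α * (1 - d) + 1)) := by
  have hβ : 0 < 1 - d := pos_of_mul_pos_right (by linarith) hα.le
  have hA1 : 0 < α * (1 - d) + 1 := by linarith
  refine isUniqueKappaMin_of_reduced hα (by linarith)
    (u₀ := 2 * (1 - d) / (α * (1 - d) + 1)) (s₀ := α * (1 - d) * (2 * (1 - d) / (α * (1 - d) + 1)))
    (by field_simp; ring) (by field_simp; ring) (by field_simp; ring)
    ⟨?_, ?_, ?_, ?_, le_of_eq (by field_simp; ring), le_rfl⟩ fun u s hR => ?_
  · rw [div_le_iff₀ hA1]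
    nlinarith
  · rw [div_le_div_iff₀ hα hA1]
    linarith
  · rw [← mul_div_assoc, le_div_iff₀ hA1]
    nlinarith
  · rw [← mul_div_assoc, div_le_one hA1]
    linarith
  · obtain ⟨-, -, -, -, hsb, hsA⟩ := hR
    exact le_sub_of_le_sub_of_le_mul hA hsb hsA

theorem kappa_minimization_general (α d : ℝ) (hα1 : 1 < α)
    (hd0 : 0 < d) (hd1 : d < 1 - 1 / α)
    (γ₀ r₀ κ₀ : ℝ)
    (hγ₀ : γ₀ = if 1 < α * (1 - d) * (1 - 2 * d) then d / (1 - d)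
      else (α * (1 - d) - 1) / (α * (1 - d) + 1))
    (hr₀ : r₀ = if 1 < α * (1 - d) * (1 - 2 * d) then α * (1 - d)
      else (1 / (1 - d) + α) / 2)
    (hκ₀ : κ₀ = if 1 < α * (1 - d) * (1 - 2 * d) then 1 / (α * (1 - d))
      else d + (1 - d) * (3 - α * (1 - d)) / (α * (1 - d) + 1)) :
    -- (γ₀, r₀) belongs to the domain D
    (1 / (1 - d) ≤ r₀ ∧ r₀ ≤ α ∧ 0 ≤ γ₀ ∧
      γ₀ ≤ min (d / (1 - d)) (min (1 - 1 / (r₀ * (1 - d))) (α / r₀ - 1))) ∧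
    -- the value at (γ₀, r₀) is κ₀
    1 + 1 / r₀ - (1 - d) * (1 + γ₀) = κ₀ ∧
    -- κ₀ is the minimum, attained only at (γ₀, r₀)
    (∀ γ r : ℝ, 1 / (1 - d) ≤ r → r ≤ α → 0 ≤ γ →
      γ ≤ min (d / (1 - d)) (min (1 - 1 / (r * (1 - d))) (α / r - 1)) →
        κ₀ ≤ 1 + 1 / r - (1 - d) * (1 + γ) ∧
          (1 + 1 / r - (1 - d) * (1 + γ) = κ₀ → γ = γ₀ ∧ r = r₀)) := by
  have hα : 0 < α := by linarith
  have hA : 1 < α * (1 - d) := by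
    have := (div_lt_iff₀ hα).1 (by linarith : 1 / α < 1 - d)
    linarith
  have hmin : IsUniqueKappaMin α d γ₀ r₀ κ₀ := by
    subst hγ₀ hr₀ hκ₀
    split_ifs with h
    · exact isUniqueKappaMin_of_one_lt hα hd0.le hA h
    · exact isUniqueKappaMin_of_le_one hα hA (not_lt.1 h)
  obtain ⟨hmem, hval, hunique⟩ := hmin
  exact ⟨hmem, hval, fun γ r h₁ h₂ h₃ h₄ => hunique γ r ⟨h₁, h₂, h₃, h₄⟩⟩

/-- Proposition C.5(i) of the paper: the function `κ(γ,r) = 1 + 1/r - (1-d)(1+γ)` attains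
its minimum over the compact domain
`D = {(γ,r) : 1/(1-d) ≤ r ≤ α, 0 ≤ γ ≤ min(d/(1-d), 1 - 1/(r(1-d)), α/r - 1)}`
at the unique point `(γ₀, r₀)`, with minimal value `κ₀`. -/
theorem kappa_minimization (α d : ℝ) (hα1 : 1 < α) (hα2 : α ≤ 2)
    (hd0 : 0 < d) (hd1 : d < 1 - 1 / α)
    (γ₀ r₀ κ₀ : ℝ)
    (hγ₀ : γ₀ = if 1 < α * (1 - d) * (1 - 2 * d) then d / (1 - d)
      else (α * (1 - d) - 1) / (α * (1 - d) + 1))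
    (hr₀ : r₀ = if 1 < α * (1 - d) * (1 - 2 * d) then α * (1 - d)
      else (1 / (1 - d) + α) / 2)
    (hκ₀ : κ₀ = if 1 < α * (1 - d) * (1 - 2 * d) then 1 / (α * (1 - d))
      else d + (1 - d) * (3 - α * (1 - d)) / (α * (1 - d) + 1)) :
    -- (γ₀, r₀) belongs to the domain D
    (1 / (1 - d) ≤ r₀ ∧ r₀ ≤ α ∧ 0 ≤ γ₀ ∧
      γ₀ ≤ min (d / (1 - d)) (min (1 - 1 / (r₀ * (1 - d))) (α / r₀ - 1))) ∧
    -- the value at (γ₀, r₀) is κ₀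
    1 + 1 / r₀ - (1 - d) * (1 + γ₀) = κ₀ ∧
    -- κ₀ is the minimum, attained only at (γ₀, r₀)
    (∀ γ r : ℝ, 1 / (1 - d) ≤ r → r ≤ α → 0 ≤ γ →
      γ ≤ min (d / (1 - d)) (min (1 - 1 / (r * (1 - d))) (α / r - 1)) →
        κ₀ ≤ 1 + 1 / r - (1 - d) * (1 + γ) ∧
          (1 + 1 / r - (1 - d) * (1 + γ) = κ₀ → γ = γ₀ ∧ r = r₀)) :=
  kappa_minimization_general α d hα1 hd0 hd1 γ₀ r₀ κ₀ hγ₀ hr₀ hκ₀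
end

section
/- Let α ∈ (1,2] and d ∈ (0, 1−1/α). Then γ₀ = min{d/(1−d), 1 − 1/(r₀(1−d)), α/r₀ − 1}, the value r₀ satisfies 1/(1−d) < r₀ < α, and κ₀ < d + 1/α. -/
/-! Write `β = α(1-d) > 1`. In the first case `r₀ = β` makes `α/r₀ - 1 = d/(1-d)`, and the case
condition `β(1-2d) > 1` is exactly what puts the middle term of the minimum above `d/(1-d)`.
In the second case `r₀` is the midpoint of `1/(1-d)` and `α`, which equalizes the last two terms
at `(β-1)/(β+1)`, and `β(1-2d) ≤ 1` is exactly `(β-1)/(β+1) ≤ d/(1-d)`. The bound on `κ₀` is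
`1/β - 1/α = d/β < d` in the first case and `β(3-β) < β+1`, i.e. `(β-1)² > 0`, in the second. -/

namespace KappaOptimizer

variable {α d : ℝ}

lemma one_lt_mul_one_sub (hα : 0 < α) (hd : d < 1 - 1 / α) : 1 < α * (1 - d) := by
  have : 1 / α < 1 - d := by linarith
  rw [div_lt_iff₀ hα] at this
  linarith

section InteriorCase

lemma div_one_sub_le_one_sub_inv (hd : d < 1) (hβ : 0 < α * (1 - d))
    (h : 1 ≤ α * (1 - d) * (1 - 2 * d)) : d / (1 - d) ≤ 1 - 1 / (α * (1 - d) * (1 - d)) := by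
  have h1d : 0 < 1 - d := by linarith
  have hsplit : d / (1 - d) = 1 - (1 - 2 * d) / (1 - d) := by
    field_simp
    ring
  have : 1 / (α * (1 - d) * (1 - d)) ≤ (1 - 2 * d) / (1 - d) := by
    rw [div_le_div_iff₀ (by positivity) h1d]
    nlinarith
  linarith

lemma div_mul_one_sub_sub_one (hα : α ≠ 0) (hd : d ≠ 1) : α / (α * (1 - d)) - 1 = d / (1 - d) := by
  have : 1 - d ≠ 0 := sub_ne_zero.mpr hd.symm
  field_simp
  ring

lemma one_div_one_sub_lt_mul_one_sub (hα : 0 < α) (hd0 : 0 ≤ d) (hd1 : d < 1)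
    (h : 1 < α * (1 - d) * (1 - 2 * d)) : 1 / (1 - d) < α * (1 - d) := by
  rw [div_lt_iff₀ (by linarith)]
  nlinarith [mul_nonneg (mul_nonneg hα.le (sub_pos.mpr hd1).le) hd0]

lemma one_div_mul_one_sub_lt (hd : 0 < d) (hβ : 1 < α * (1 - d)) :
    1 / (α * (1 - d)) < d + 1 / α := by
  have hα : α ≠ 0 := by rintro rfl; norm_num at hβ
  have h1d : 1 - d ≠ 0 := by rintro h; norm_num [h] at hβ
  have hdiff : 1 / (α * (1 - d)) - 1 / α = d / (α * (1 - d)) := by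
    field_simp
    ring
  have : d / (α * (1 - d)) < d := div_lt_self hd hβ
  linarith

end InteriorCase

section BoundaryCase

lemma one_sub_one_div_midpoint_mul (hd : d ≠ 1) (hβ : α * (1 - d) + 1 ≠ 0) :
    1 - 1 / ((1 / (1 - d) + α) / 2 * (1 - d)) = (α * (1 - d) - 1) / (α * (1 - d) + 1) := by
  have h1d : 1 - d ≠ 0 := sub_ne_zero.mpr hd.symm
  have hmid : (1 / (1 - d) + α) / 2 * (1 - d) = (α * (1 - d) + 1) / 2 := by
    field_simp
    ring
  rw [hmid]
  field_simp
  ring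

lemma div_midpoint_sub_one (hd : d ≠ 1) (hβ : α * (1 - d) + 1 ≠ 0) :
    α / ((1 / (1 - d) + α) / 2) - 1 = (α * (1 - d) - 1) / (α * (1 - d) + 1) := by
  have h1d : 1 - d ≠ 0 := sub_ne_zero.mpr hd.symm
  have hmid : (1 / (1 - d) + α) / 2 = (α * (1 - d) + 1) / (2 * (1 - d)) := by
    field_simp
    ring
  rw [hmid]
  field_simp
  ring

lemma sub_one_div_add_one_le_div_one_sub (hd : d < 1) (hβ : 0 < α * (1 - d) + 1)
    (h : α * (1 - d) * (1 - 2 * d) ≤ 1) :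
    (α * (1 - d) - 1) / (α * (1 - d) + 1) ≤ d / (1 - d) := by
  rw [div_le_div_iff₀ hβ (by linarith)]
  nlinarith

lemma one_sub_mul_three_sub_div_lt_one_div (hα : 0 < α) (hβ : 1 < α * (1 - d)) :
    (1 - d) * (3 - α * (1 - d)) / (α * (1 - d) + 1) < 1 / α := by
  rw [div_lt_div_iff₀ (by linarith) hα]
  nlinarith [sq_pos_of_pos (sub_pos.mpr hβ)]

end BoundaryCase

end KappaOptimizer

open KappaOptimizer in
theorem kappa_optimizer_properties_general (α d : ℝ) (hα1 : 1 < α)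
    (hd0 : 0 < d) (hd1 : d < 1 - 1 / α)
    (γ₀ r₀ κ₀ : ℝ)
    (hγ₀ : γ₀ = if 1 < α * (1 - d) * (1 - 2 * d) then d / (1 - d)
      else (α * (1 - d) - 1) / (α * (1 - d) + 1))
    (hr₀ : r₀ = if 1 < α * (1 - d) * (1 - 2 * d) then α * (1 - d)
      else (1 / (1 - d) + α) / 2)
    (hκ₀ : κ₀ = if 1 < α * (1 - d) * (1 - 2 * d) then 1 / (α * (1 - d))
      else d + (1 - d) * (3 - α * (1 - d)) / (α * (1 - d) + 1)) :
    γ₀ = min (d / (1 - d)) (min (1 - 1 / (r₀ * (1 - d))) (α / r₀ - 1)) ∧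
    (1 / (1 - d) < r₀ ∧ r₀ < α) ∧
    κ₀ < d + 1 / α := by
  have hα : 0 < α := by linarith
  have hβ : 1 < α * (1 - d) := one_lt_mul_one_sub hα hd1
  have hd : d < 1 := by nlinarith
  subst hγ₀ hr₀ hκ₀
  split_ifs with h
  · refine ⟨?_, ⟨one_div_one_sub_lt_mul_one_sub hα hd0.le hd h, by nlinarith⟩,
      one_div_mul_one_sub_lt hd0 hβ⟩
    rw [div_mul_one_sub_sub_one hα.ne' hd.ne,
      min_eq_right (div_one_sub_le_one_sub_inv hd (by linarith) h.le), min_self]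
  · have hlt : 1 / (1 - d) < α := (div_lt_iff₀ (by linarith)).mpr hβ
    refine ⟨?_, ⟨left_lt_add_div_two.mpr hlt, add_div_two_lt_right.mpr hlt⟩,
      by linarith [one_sub_mul_three_sub_div_lt_one_div hα hβ]⟩
    rw [one_sub_one_div_midpoint_mul hd.ne (by linarith), div_midpoint_sub_one hd.ne (by linarith),
      min_self, min_eq_right (sub_one_div_add_one_le_div_one_sub hd (by linarith) (not_lt.mp h))]

/-- Proposition C.5(ii) of the paper: the optimizers `(γ₀, r₀)` satisfy
`γ₀ = min(d/(1-d), 1 - 1/(r₀(1-d)), α/r₀ - 1)`, `1/(1-d) < r₀ < α`, and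
`κ₀ < d + 1/α`. -/
theorem kappa_optimizer_properties (α d : ℝ) (hα1 : 1 < α) (hα2 : α ≤ 2)
    (hd0 : 0 < d) (hd1 : d < 1 - 1 / α)
    (γ₀ r₀ κ₀ : ℝ)
    (hγ₀ : γ₀ = if 1 < α * (1 - d) * (1 - 2 * d) then d / (1 - d)
      else (α * (1 - d) - 1) / (α * (1 - d) + 1))
    (hr₀ : r₀ = if 1 < α * (1 - d) * (1 - 2 * d) then α * (1 - d)
      else (1 / (1 - d) + α) / 2)
    (hκ₀ : κ₀ = if 1 < α * (1 - d) * (1 - 2 * d) then 1 / (α * (1 - d))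
      else d + (1 - d) * (3 - α * (1 - d)) / (α * (1 - d) + 1)) :
    γ₀ = min (d / (1 - d)) (min (1 - 1 / (r₀ * (1 - d))) (α / r₀ - 1)) ∧
    (1 / (1 - d) < r₀ ∧ r₀ < α) ∧
    κ₀ < d + 1 / α :=
  kappa_optimizer_properties_general α d hα1 hd0 hd1 γ₀ r₀ κ₀ hγ₀ hr₀ hκ₀
end

section
/- Let β > 0 and let ω : ℝ → ℝ be continuously differentiable with ω(x) > 0 for all sufficiently large x, and suppose x^{1−β} ω'(x)/ω(x) → 0 as x → ∞. Set f(x) := ω(x)·exp(−x^β/β). Then ∫_u^∞ f(x) dx is finite for all sufficiently large u, and u^{1−β} f(u) / ∫_u^∞ f(x) dx → 1 as u → ∞. -/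
/-! With `f = ω · exp(-x^β/β)` and `G(u) = u^(1-β) f(u)` one computes `G' = -f H` with `H → 1`.
Once `H ≥ 1/2`, `(log G)' ≤ -u^(β-1)/2`, so `G` decays like `exp(-u^β/(2β))` (a Grönwall
estimate); hence `G(u) = ∫_u^∞ f H`, which is asymptotic to `∫_u^∞ f` because `H → 1`. -/

open MeasureTheory Filter Set Asymptotics Topology

theorem tendsto_zero_of_hasDerivAt_le_neg_mul_self {G G' g g' : ℝ → ℝ} {a : ℝ}
    (hpos : ∀ x ∈ Ici a, 0 < G x) (hG : ∀ x ∈ Ici a, HasDerivAt G (G' x) x)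
    (hg : ∀ x ∈ Ici a, HasDerivAt g (g' x) x) (hle : ∀ x ∈ Ici a, G' x ≤ -(g' x * G x))
    (hg_top : Tendsto g atTop atTop) : Tendsto G atTop (𝓝 0) := by
  set φ : ℝ → ℝ := fun y => Real.log (G y) + g y
  have hφ : ∀ x ∈ Ici a, HasDerivAt φ (G' x / G x + g' x) x :=
    fun x hx => ((hG x hx).log (hpos x hx).ne').add (hg x hx)
  have hanti : AntitoneOn φ (Ici a) := by
    refine antitoneOn_of_deriv_nonpos (convex_Ici a)
      (fun x hx => (hφ x hx).continuousAt.continuousWithinAt)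
      (fun x hx => (hφ x (interior_subset hx)).differentiableAt.differentiableWithinAt)
      fun x hx => ?_
    have hx : x ∈ Ici a := interior_subset hx
    rw [(hφ x hx).deriv]
    have : G' x / G x ≤ -g' x := (div_le_iff₀ (hpos x hx)).2 (by linarith [hle x hx])
    linarith
  have hbound : ∀ x ∈ Ici a, G x ≤ Real.exp (φ a - g x) := fun x hx => by
    rw [← Real.exp_log (hpos x hx)]
    exact Real.exp_le_exp.2 (by linarith [hanti self_mem_Ici hx hx])
  refine squeeze_zero' (eventually_atTop.2 ⟨a, fun x hx => (hpos x hx).le⟩)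
    (eventually_atTop.2 ⟨a, hbound⟩) ?_
  exact Real.tendsto_exp_atBot.comp
    (tendsto_atBot_add_const_left _ _ (tendsto_neg_atTop_atBot.comp hg_top))

theorem IntegrableOn.of_mul_of_le_right {α : Type*} [MeasurableSpace α] {μ : Measure α}
    {f h : α → ℝ} {s : Set α} {c : ℝ} (hfh : IntegrableOn (fun x => f x * h x) s μ)
    (hf : AEStronglyMeasurable f (μ.restrict s)) (hs : MeasurableSet s) (hc : 0 < c)
    (hle : ∀ x ∈ s, 0 ≤ f x ∧ c ≤ h x) : IntegrableOn f s μ := by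
  refine Integrable.mono' (hfh.const_mul c⁻¹) hf (ae_restrict_of_forall_mem hs fun x hx => ?_)
  obtain ⟨hf0, hch⟩ := hle x hx
  rw [Real.norm_of_nonneg hf0, le_inv_mul_iff₀ hc, mul_comm]
  exact mul_le_mul_of_nonneg_left hch hf0

theorem isEquivalent_setIntegral_Ioi_mul {f h : ℝ → ℝ} (hf : ∀ᶠ x in atTop, 0 ≤ f x)
    (hfi : ∀ᶠ u in atTop, IntegrableOn f (Ioi u))
    (hfhi : ∀ᶠ u in atTop, IntegrableOn (fun x => f x * h x) (Ioi u))
    (hh : Tendsto h atTop (𝓝 1)) :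
    (fun u => ∫ x in Ioi u, f x * h x) ~[atTop] fun u => ∫ x in Ioi u, f x := by
  refine isLittleO_iff.2 fun c hc => ?_
  obtain ⟨b, hb⟩ := eventually_atTop.1 (hf.and (hh.eventually (Metric.closedBall_mem_nhds 1 hc)))
  filter_upwards [hfi, hfhi, eventually_ge_atTop b] with u hfu hfhu hbu
  have hb' : ∀ x ∈ Ioi u, 0 ≤ f x ∧ |h x - 1| ≤ c := fun x hx => by
    simpa [Real.dist_eq] using hb x (hbu.trans (le_of_lt hx))
  calc ‖(∫ x in Ioi u, f x * h x) - ∫ x in Ioi u, f x‖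
      = ‖∫ x in Ioi u, f x * (h x - 1)‖ := by
        rw [← integral_sub hfhu hfu]; simp only [mul_sub, mul_one]
    _ ≤ ∫ x in Ioi u, c * f x := by
        refine norm_integral_le_of_norm_le (hfu.const_mul c)
          (ae_restrict_of_forall_mem measurableSet_Ioi fun x hx => ?_)
        obtain ⟨hf0, hhc⟩ := hb' x hx
        rw [norm_mul, Real.norm_of_nonneg hf0, Real.norm_eq_abs, mul_comm]
        exact mul_le_mul_of_nonneg_right hhc hf0
    _ = c * ‖∫ x in Ioi u, f x‖ := by
        rw [integral_const_mul, Real.norm_of_nonneg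
          (setIntegral_nonneg measurableSet_Ioi fun x hx => (hb' x hx).1)]

noncomputable def weibullDensity (β : ℝ) (ω : ℝ → ℝ) (x : ℝ) : ℝ := ω x * Real.exp (-x ^ β / β)

/-- The l'Hôpital ratio `(u^(1-β) f(u))' / (∫_u^∞ f)'` for `f = weibullDensity β ω`. -/
noncomputable def weibullHopitalRatio (β : ℝ) (ω : ℝ → ℝ) (x : ℝ) : ℝ :=
  1 - (1 - β) * x ^ (-β) - x ^ (1 - β) * deriv ω x / ω x

section

variable {β x : ℝ} {ω : ℝ → ℝ}

theorem weibullDensity_pos (hωx : 0 < ω x) : 0 < weibullDensity β ω x :=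
  mul_pos hωx (Real.exp_pos _)

theorem hasDerivAt_rpow_mul_weibullDensity (hβ : β ≠ 0) (hω : DifferentiableAt ℝ ω x)
    (hx : 0 < x) (hωx : ω x ≠ 0) :
    HasDerivAt (fun y => y ^ (1 - β) * weibullDensity β ω y)
      (-(weibullDensity β ω x * weibullHopitalRatio β ω x)) x := by
  have hpow : HasDerivAt (fun y : ℝ => y ^ (1 - β)) ((1 - β) * x ^ (-β)) x := by
    simpa using Real.hasDerivAt_rpow_const (p := 1 - β) (Or.inl hx.ne')
  have hexp : HasDerivAt (fun y : ℝ => -y ^ β / β) (-x ^ (β - 1)) x :=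
    ((Real.hasDerivAt_rpow_const (Or.inl hx.ne')).neg.div_const β).congr_deriv (by field_simp)
  have hcancel : x ^ (1 - β) * x ^ (β - 1) = 1 := by
    rw [← Real.rpow_add hx]; norm_num
  refine (hpow.mul (hω.hasDerivAt.mul hexp.exp)).congr_deriv ?_
  simp only [weibullDensity, weibullHopitalRatio, Pi.mul_apply]
  field_simp
  linear_combination -ω x * hcancel

theorem tendsto_weibullHopitalRatio (hβ : 0 < β)
    (h : Tendsto (fun x => x ^ (1 - β) * deriv ω x / ω x) atTop (𝓝 0)) :
    Tendsto (weibullHopitalRatio β ω) atTop (𝓝 1) := by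
  have := (((tendsto_rpow_neg_atTop hβ).const_mul (1 - β)).const_sub 1).sub h
  rwa [mul_zero, sub_zero, sub_zero] at this

theorem tendsto_rpow_mul_weibullDensity_zero (hβ : 0 < β) (hω : Differentiable ℝ ω) {a c : ℝ}
    (hc : 0 < c) (ha : ∀ x ∈ Ici a, 0 < x ∧ 0 < ω x ∧ c ≤ weibullHopitalRatio β ω x) :
    Tendsto (fun x => x ^ (1 - β) * weibullDensity β ω x) atTop (𝓝 0) := by
  refine tendsto_zero_of_hasDerivAt_le_neg_mul_self (g := fun x => c * x ^ β / β)
    (fun x hx => mul_pos (Real.rpow_pos_of_pos (ha x hx).1 _) (weibullDensity_pos (ha x hx).2.1))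
    (fun x hx => hasDerivAt_rpow_mul_weibullDensity hβ.ne' (hω x) (ha x hx).1 (ha x hx).2.1.ne')
    (fun x hx => ((Real.hasDerivAt_rpow_const (Or.inl (ha x hx).1.ne')).const_mul c).div_const β)
    (fun x hx => ?_) ?_
  · obtain ⟨hx0, hωx, hcH⟩ := ha x hx
    have hcancel : x ^ (β - 1) * x ^ (1 - β) = 1 := by
      rw [← Real.rpow_add hx0]; norm_num
    have hF := weibullDensity_pos (β := β) hωx
    calc -(weibullDensity β ω x * weibullHopitalRatio β ω x) ≤ -(weibullDensity β ω x * c) := by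
          gcongr
      _ = -(c * (β * x ^ (β - 1)) / β * (x ^ (1 - β) * weibullDensity β ω x)) := by
          field_simp
          linear_combination hcancel
  · exact ((tendsto_rpow_atTop hβ).const_mul_atTop hc).atTop_div_const hβ

theorem setIntegral_Ioi_weibullDensity_mul_hopitalRatio (hβ : 0 < β) (hω : Differentiable ℝ ω)
    {a c u : ℝ} (hc : 0 < c) (ha : ∀ x ∈ Ici a, 0 < x ∧ 0 < ω x ∧ c ≤ weibullHopitalRatio β ω x)
    (hu : u ∈ Ici a) :
    IntegrableOn (fun x => weibullDensity β ω x * weibullHopitalRatio β ω x) (Ioi u) ∧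
      ∫ x in Ioi u, weibullDensity β ω x * weibullHopitalRatio β ω x =
        u ^ (1 - β) * weibullDensity β ω u := by
  have hderiv : ∀ x ∈ Ici u, HasDerivAt (fun y => -(y ^ (1 - β) * weibullDensity β ω y))
      (weibullDensity β ω x * weibullHopitalRatio β ω x) x := fun x hx => by
    obtain ⟨hx0, hωx, -⟩ := ha x (mem_Ici.2 (hu.trans hx))
    exact (hasDerivAt_rpow_mul_weibullDensity hβ.ne' (hω x) hx0 hωx.ne').neg.congr_deriv (neg_neg _)
  have hnonneg : ∀ x ∈ Ioi u, 0 ≤ weibullDensity β ω x * weibullHopitalRatio β ω x := fun x hx => by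
    obtain ⟨-, hωx, hcH⟩ := ha x (mem_Ici.2 (hu.trans hx.le))
    exact mul_nonneg (weibullDensity_pos hωx).le (hc.le.trans hcH)
  have hlim := (tendsto_rpow_mul_weibullDensity_zero hβ hω hc ha).neg
  rw [neg_zero] at hlim
  refine ⟨integrableOn_Ioi_deriv_of_nonneg' hderiv hnonneg hlim, ?_⟩
  rw [integral_Ioi_of_hasDerivAt_of_nonneg' hderiv hnonneg hlim, zero_sub, neg_neg]

theorem continuous_weibullDensity (hβ : 0 ≤ β) (hω : Continuous ω) :
    Continuous (weibullDensity β ω) :=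
  hω.mul (Real.continuous_exp.comp ((Real.continuous_rpow_const hβ).neg.div_const β))

end

/-- Equation (eqn:hopital) in the proof of Corollary 3.5 of the paper: for a Weibull-type
density `f(x) = ω(x) exp(-x^β/β)` with `ω` C¹, eventually positive, and
`x^{1-β} ω'(x)/ω(x) → 0` at `∞`, the tail integral `∫_u^∞ f` is finite for large `u` and
`u^{1-β} f(u) / ∫_u^∞ f(x) dx → 1` as `u → ∞`. -/
theorem weibull_tail_equivalence (β : ℝ) (hβ : 0 < β) (ω : ℝ → ℝ) (hω : ContDiff ℝ 1 ω)
    (hpos : ∀ᶠ x in atTop, 0 < ω x)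
    (h : Tendsto (fun x => x ^ (1 - β) * deriv ω x / ω x) atTop (nhds 0)) :
    (∀ᶠ u in atTop, IntegrableOn (fun x => ω x * Real.exp (-x ^ β / β)) (Set.Ioi u)) ∧
    Tendsto (fun u => u ^ (1 - β) * (ω u * Real.exp (-u ^ β / β)) /
        ∫ x in Set.Ioi u, ω x * Real.exp (-x ^ β / β)) atTop (nhds 1) := by
  change (∀ᶠ u in atTop, IntegrableOn (weibullDensity β ω) (Ioi u)) ∧
    Tendsto (fun u => u ^ (1 - β) * weibullDensity β ω u / ∫ x in Ioi u, weibullDensity β ω x)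
      atTop (𝓝 1)
  have hratio := tendsto_weibullHopitalRatio hβ h
  obtain ⟨a, ha⟩ := eventually_atTop.1 <| (eventually_gt_atTop 0).and <| hpos.and <|
    hratio.eventually_const_le one_half_lt_one
  have htail := fun u (hu : u ∈ Ici a) => setIntegral_Ioi_weibullDensity_mul_hopitalRatio hβ
    (hω.differentiable one_ne_zero) one_half_pos ha hu
  have hF_pos : ∀ x ∈ Ici a, 0 < weibullDensity β ω x := fun x hx =>
    weibullDensity_pos (ha x hx).2.1
  have hF_int : ∀ u ∈ Ici a, IntegrableOn (weibullDensity β ω) (Ioi u) := fun u hu =>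
    IntegrableOn.of_mul_of_le_right (htail u hu).1
      (continuous_weibullDensity hβ.le hω.continuous).aestronglyMeasurable measurableSet_Ioi
      one_half_pos fun x hx =>
        have hax : a ≤ x := le_trans hu hx.le
        ⟨(hF_pos x hax).le, (ha x hax).2.2⟩
  have hequiv : (fun u => u ^ (1 - β) * weibullDensity β ω u) ~[atTop]
      fun u => ∫ x in Ioi u, weibullDensity β ω x :=
    (isEquivalent_setIntegral_Ioi_mul (eventually_atTop.2 ⟨a, fun x hx => (hF_pos x hx).le⟩)
      (eventually_atTop.2 ⟨a, hF_int⟩) (eventually_atTop.2 ⟨a, fun u hu => (htail u hu).1⟩)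
      hratio).congr_left (eventually_atTop.2 ⟨a, fun u hu => (htail u hu).2⟩)
  refine ⟨eventually_atTop.2 ⟨a, hF_int⟩, (isEquivalent_iff_tendsto_one ?_).1 hequiv⟩
  refine (hequiv.symm.eventually_pos (eventually_atTop.2 ⟨a, fun u hu => ?_⟩)).mono
    fun _ => ne_of_gt
  exact mul_pos (Real.rpow_pos_of_pos (ha u hu).1 _) (hF_pos u hu)
end
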